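/- arXiv:1608.07073 — 2 statements merged into one kernel-verified Lean document; each statement's English description precedes it below -/
import Mathlib

section
/- Let ι denote coefficientwise Laurent expansion at q = 0, mapping ℚ(q)((t)) into ℚ((q))((t)). Define φ₀,₁(q⁻¹t, t) := 12 · ℘(q⁻¹t, t) · ι(φ₋₂,₁(q⁻¹t, t)) ∈ ℚ((q))((t)), where φ₋₂,₁(q⁻¹t,t) and ℘(q⁻¹t,t) are the series obtained from the defining product of φ₋₂,₁ and the defining expansion of ℘ by substituting q ↦ q⁻¹t. Then φ₀,₁(q⁻¹t, t) = q² t⁻¹ · ι(φ₀,₁(q, t)). -/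
noncomputable section

open PowerSeries

/-- The field `ℚ(q)` of rational functions in `q`. -/
abbrev K : Type := RatFunc ℚ

/-- The variable `q ∈ ℚ(q)`. -/
def q : K := RatFunc.X

/-- `s = q + 2 + q⁻¹`. -/
def s : K := q + 2 + q⁻¹

/-- The `m`-th factor of the infinite product defining `φ_{-2,1}`. -/
def phiFactor (m : ℕ) : PowerSeries K :=
  (1 + C q * X ^ m) ^ 2 * (1 + C q⁻¹ * X ^ m) ^ 2 * ((1 - X ^ m)⁻¹) ^ 4

/-- The infinite product `∏_{m ≥ 1} (1 + q tᵐ)² (1 + q⁻¹ tᵐ)² (1 - tᵐ)⁻⁴`, convergent in the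
`t`-adic topology: the coefficient of `t^d` equals that of any partial product
`∏_{m=1}^{N}` with `N ≥ d`, since the `m`-th factor is `≡ 1 mod t^m`. -/
def phiProd : PowerSeries K :=
  PowerSeries.mk fun d => coeff d (∏ m ∈ Finset.Icc 1 d, phiFactor m)

/-- The weak Jacobi form `φ_{-2,1}(q,t)` of weight `-2` and index `1`. -/
def phi : PowerSeries K := C s * phiProd

/-- The Weierstraß elliptic function expansion
`℘(q,t) = -1/12 + q/(1+q)² - ∑_{d≥1} (∑_{m|d} m((-q)^m - 2 + (-q)^{-m})) t^d`. -/
def wp : PowerSeries K :=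
  PowerSeries.mk fun d =>
    if d = 0 then -(1 / 12) + q / (1 + q) ^ 2
    else -∑ m ∈ d.divisors, (m : K) * ((-q) ^ (m : ℤ) - 2 + (-q) ^ (-(m : ℤ)))

/-- The weak Jacobi form `φ_{0,1}(q,t) = 12 ℘(q,t) φ_{-2,1}(q,t)` of weight `0` and index `1`. -/
def phi01 : PowerSeries K := 12 * wp * phi


/-- The `m`-th factor of the product defining `φ_{-2,1}(q⁻¹t, t)`, obtained from the `m`-th
factor of the product defining `φ_{-2,1}` by substituting `q ↦ q⁻¹t`. -/
def phiSubFactor (m : ℕ) : PowerSeries K :=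
  (1 + C q⁻¹ * X ^ (m + 1)) ^ 2 * (1 + C q * X ^ (m - 1)) ^ 2 * ((1 - X ^ m)⁻¹) ^ 4

/-- The infinite product `∏_{m ≥ 1} (1 + q⁻¹t^{m+1})² (1 + q t^{m-1})² (1 - t^m)⁻⁴`, convergent
in the `t`-adic topology: the coefficient of `t^d` equals that of any partial product
`∏_{m=1}^{N}` with `N ≥ d + 1`, since the `m`-th factor is `≡ 1 mod t^{m-1}`. -/
def phiSubProd : PowerSeries K :=
  PowerSeries.mk fun d => coeff d (∏ m ∈ Finset.Icc 1 (d + 1), phiSubFactor m)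

/-- The series `φ_{-2,1}(q⁻¹t, t) ∈ ℚ(q)((t))`. -/
def phiSub : LaurentSeries K :=
  (HahnSeries.single (1 : ℤ) q⁻¹ + 2 + HahnSeries.single (-1 : ℤ) q) *
    HahnSeries.ofPowerSeries ℤ K phiSubProd

/-- The `t^e`-coefficient of `℘(q⁻¹t, t)`, obtained from the defining expansion of `℘` by
substituting `q ↦ q⁻¹t` and regrouping by powers of `t` (each `t`-coefficient a convergent
Laurent series in `q`). -/
def wpSubCoeff (e : ℕ) : LaurentSeries ℚ :=
  if e = 0 then
    -(1 / 12) - HahnSeries.ofPowerSeries ℤ ℚ (PowerSeries.mk fun m => (-1 : ℚ) ^ m * m)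
  else
    HahnSeries.single (-(e : ℤ)) ((-1 : ℚ) ^ (e - 1) * e)
      - ((∑ m ∈ e.properDivisors, HahnSeries.single (-(m : ℤ)) ((-1 : ℚ) ^ m * m))
          - HahnSeries.C (∑ m ∈ e.divisors, 2 * (m : ℚ))
          + ∑ m ∈ e.divisors, HahnSeries.single ((m : ℤ)) ((-1 : ℚ) ^ m * m))

/-- The series `℘(q⁻¹t, t) ∈ ℚ((q))[[t]]`. -/
def wpSub : PowerSeries (LaurentSeries ℚ) := PowerSeries.mk wpSubCoeff

/-- Coefficientwise Laurent expansion at `q = 0`, mapping `ℚ(q)((t))` into `ℚ((q))((t))`. -/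
def iotaL (f : LaurentSeries K) : LaurentSeries (LaurentSeries ℚ) :=
  f.map (@algebraMap (RatFunc ℚ) (LaurentSeries ℚ) _ _ (RatFunc.liftAlgebra ℚ (LaurentSeries ℚ)))

/-!
Under `q ↦ q⁻¹t` the factor `(1 + q tᵐ)²` of the product becomes `(1 + q t^{m-1})²` and
`(1 + q⁻¹tᵐ)²` becomes `(1 + q⁻¹t^{m+1})²`, so the product telescopes:
`(1 + q⁻¹t)² ∏(q⁻¹t, t) = (1 + q)² ∏(q, t)`. Since `t (q⁻¹t + 2 + q t⁻¹) = q (1 + q⁻¹t)²` and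
`q (1 + q)² = q² (q + 2 + q⁻¹)`, this gives `φ₋₂,₁(q⁻¹t, t) = q² t⁻¹ φ₋₂,₁(q, t)` already over
`ℚ(q)`. Identities between infinite products are checked modulo each `tⁿ`, where only finitely
many factors matter. On the other side, `℘` is elliptic: each `t`-coefficient of `℘(q⁻¹t, t)` is
the Laurent expansion at `q = 0` of the same coefficient of `℘(q, t)`, the only non-polynomial
one being `q / (1 + q)² = ∑ (-1)^{j-1} j qʲ`. Applying the ring homomorphism `ι` finishes.
-/

namespace PowerSeries

variable {R : Type*} [CommRing R]

def modXPow (n : ℕ) : R⟦X⟧ →+* R⟦X⟧ ⧸ Ideal.span {(X : R⟦X⟧) ^ n} := Ideal.Quotient.mk _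

theorem modXPow_eq_iff {n : ℕ} {f g : R⟦X⟧} :
    modXPow n f = modXPow n g ↔ ∀ e < n, coeff e f = coeff e g := by
  simp only [modXPow, Ideal.Quotient.eq, Ideal.mem_span_singleton, X_pow_dvd_iff, map_sub,
    sub_eq_zero]

theorem modXPow_eq_of_le {m n : ℕ} {f g : R⟦X⟧} (hmn : m ≤ n)
    (h : modXPow n f = modXPow n g) : modXPow m f = modXPow m g :=
  modXPow_eq_iff.2 fun e he => modXPow_eq_iff.1 h e (he.trans_le hmn)

theorem ext_modXPow {f g : R⟦X⟧} (h : ∀ n, modXPow n f = modXPow n g) : f = g :=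
  ext fun d => modXPow_eq_iff.1 (h (d + 1)) d (lt_add_one d)

theorem modXPow_X_pow {m n : ℕ} (h : n ≤ m) : modXPow n (X ^ m : R⟦X⟧) = 0 :=
  Ideal.Quotient.eq_zero_iff_mem.2 (Ideal.mem_span_singleton.2 (pow_dvd_pow X h))

theorem modXPow_one_add_C_mul_X_pow (a : R) {m n : ℕ} (h : n ≤ m) :
    modXPow n (1 + C a * X ^ m) = 1 := by
  rw [map_add, map_mul, modXPow_X_pow h, mul_zero, add_zero, map_one]

theorem modXPow_inv_one_sub_X_pow {k : Type*} [Field k] {m n : ℕ} (h : n ≤ m) :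
    modXPow n ((1 - X ^ m : k⟦X⟧)⁻¹) = 1 := by
  rcases Nat.eq_zero_or_pos m with rfl | hm
  · -- the junk value `(1 - X ^ 0)⁻¹ = 0⁻¹` is harmless: modulo `X ^ 0` all series agree
    rw [← map_one (modXPow n)]
    exact modXPow_eq_iff.2 fun e he => by omega
  · have hinv : (1 - X ^ m : k⟦X⟧) * (1 - X ^ m)⁻¹ = 1 :=
      PowerSeries.mul_inv_cancel _ (by simp [hm.ne'])
    have hone : modXPow n (1 - X ^ m : k⟦X⟧) = 1 := by
      rw [map_sub, map_one, modXPow_X_pow h, sub_zero]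
    simpa [hone] using congrArg (modXPow n) hinv

theorem modXPow_mk_coeff_prod_Icc {f : ℕ → R⟦X⟧} {c : ℕ}
    (hf : ∀ m, modXPow m (f (m + c)) = 1) {n N : ℕ} (hN : n + c ≤ N + 1) :
    modXPow n (mk fun d => coeff d (∏ m ∈ Finset.Icc 1 (d + c), f m)) =
      modXPow n (∏ m ∈ Finset.Icc 1 N, f m) := by
  refine modXPow_eq_iff.2 fun e he => ?_
  rw [coeff_mk]
  refine modXPow_eq_iff.1 ?_ e (lt_add_one e)
  have hsplit : ∏ m ∈ Finset.Icc 1 N, f m =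
      (∏ m ∈ Finset.Icc 1 (e + c), f m) * ∏ m ∈ Finset.Ioc (e + c) N, f m := by
    have hIcc (M : ℕ) : Finset.Icc 1 M = Finset.Ioc 0 M := Finset.Icc_add_one_left_eq_Ioc 0 M
    rw [hIcc, hIcc, Finset.prod_Ioc_consecutive _ (Nat.zero_le _) (by omega)]
  have htail : modXPow (e + 1) (∏ m ∈ Finset.Ioc (e + c) N, f m) = 1 := by
    rw [map_prod]
    refine Finset.prod_eq_one fun m hm => ?_
    have hm := (Finset.mem_Ioc.1 hm).1
    obtain ⟨k, rfl⟩ : ∃ k, m = k + c := ⟨m - c, by omega⟩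
    rw [← map_one (modXPow (e + 1))]
    exact modXPow_eq_of_le (by omega) ((hf k).trans (map_one _).symm)
  rw [hsplit, map_mul _ (∏ m ∈ Finset.Icc 1 (e + c), f m), htail, mul_one]

theorem one_add_X_sq_mul_mk_neg_one_pow_mul :
    ((1 + X) ^ 2 * mk fun m => (-1 : R) ^ m * m) = -X := by
  set A : R⟦X⟧ := mk fun m => (-1 : R) ^ m * m
  have hsplit : (1 + X) ^ 2 * A = A + X * (A + A + X * A) := by ring
  ext n
  rw [hsplit]
  rcases n with _ | _ | n
  · simp [A]
  · simp [A, coeff_succ_X_mul]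
  · rw [map_add, coeff_succ_X_mul, map_add, map_add, coeff_succ_X_mul, map_neg, coeff_X,
      if_neg (by omega)]
    simp only [A, coeff_mk]
    push_cast
    ring

end PowerSeries

theorem modXPow_phiFactor (m : ℕ) : modXPow m (phiFactor m) = 1 := by
  simp only [phiFactor, map_mul, map_pow, modXPow_one_add_C_mul_X_pow _ le_rfl,
    modXPow_inv_one_sub_X_pow le_rfl, one_pow, one_mul]

theorem modXPow_phiSubFactor (m : ℕ) : modXPow m (phiSubFactor (m + 1)) = 1 := by
  simp only [phiSubFactor, Nat.add_sub_cancel, map_mul, map_pow,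
    modXPow_one_add_C_mul_X_pow _ (by omega : m ≤ m + 1 + 1),
    modXPow_one_add_C_mul_X_pow _ le_rfl, modXPow_inv_one_sub_X_pow (Nat.le_succ m), one_pow,
    one_mul]

theorem prod_phiSubFactor_mul_eq_prod_phiFactor_mul (N : ℕ) :
    (∏ m ∈ Finset.Icc 1 N, phiSubFactor m) * (1 + C q⁻¹ * X) ^ 2 * (1 + C q * X ^ N) ^ 2 =
      (∏ m ∈ Finset.Icc 1 N, phiFactor m) * (1 + C q) ^ 2 * (1 + C q⁻¹ * X ^ (N + 1)) ^ 2 := by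
  induction N with
  | zero => simp only [Finset.Icc_eq_empty_of_lt zero_lt_one, Finset.prod_empty]; ring
  | succ N ih =>
    rw [Finset.prod_Icc_succ_top (by omega), Finset.prod_Icc_succ_top (by omega),
      phiFactor, show phiSubFactor (N + 1) = (1 + C q⁻¹ * X ^ (N + 1 + 1)) ^ 2 *
        (1 + C q * X ^ N) ^ 2 * ((1 - X ^ (N + 1))⁻¹) ^ 4 from rfl]
    linear_combination (1 + C q⁻¹ * X ^ (N + 1 + 1)) ^ 2 * ((1 - X ^ (N + 1))⁻¹) ^ 4 *
      (1 + C q * X ^ (N + 1)) ^ 2 * ih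

theorem one_add_C_mul_X_sq_mul_phiSubProd :
    (1 + C q⁻¹ * X) ^ 2 * phiSubProd = C ((1 + q) ^ 2) * phiProd := by
  refine ext_modXPow fun n => ?_
  have hSub : modXPow n phiSubProd = modXPow n (∏ m ∈ Finset.Icc 1 n, phiSubFactor m) :=
    modXPow_mk_coeff_prod_Icc (c := 1) modXPow_phiSubFactor le_rfl
  have hProd : modXPow n phiProd = modXPow n (∏ m ∈ Finset.Icc 1 n, phiFactor m) :=
    modXPow_mk_coeff_prod_Icc (c := 0) modXPow_phiFactor (Nat.le_succ n)
  have htele := congrArg (modXPow n) (prod_phiSubFactor_mul_eq_prod_phiFactor_mul n)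
  simp only [map_mul, map_pow, modXPow_one_add_C_mul_X_pow _ le_rfl,
    modXPow_one_add_C_mul_X_pow _ (Nat.le_succ n), one_pow, mul_one] at htele
  have hC : (C ((1 + q) ^ 2) : K⟦X⟧) = (1 + C q) ^ 2 := by simp
  rw [hC, map_mul, map_mul, map_pow, map_pow, hSub, hProd]
  linear_combination htele

theorem single_one_inv_add_two_add_single_neg_one {k : Type*} [Field k] {a : k} (ha : a ≠ 0) :
    (HahnSeries.single (1 : ℤ) a⁻¹ + 2 + HahnSeries.single (-1 : ℤ) a : LaurentSeries k) =
      HahnSeries.single (-1) 1 * HahnSeries.ofPowerSeries ℤ k (C a * (1 + C a⁻¹ * X) ^ 2) := by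
  have hC : (C a * C a⁻¹ : k⟦X⟧) = 1 := by rw [← map_mul, mul_inv_cancel₀ ha, map_one]
  have hexp : (C a * (1 + C a⁻¹ * X) ^ 2 : k⟦X⟧) = C a + C 2 * X + C a⁻¹ * X ^ 2 := by
    rw [map_ofNat]
    linear_combination (2 * X + C a⁻¹ * X ^ 2) * hC
  rw [hexp, ← HahnSeries.single_zero_ofNat]
  simp only [map_add, map_mul, HahnSeries.ofPowerSeries_C, HahnSeries.ofPowerSeries_X,
    HahnSeries.ofPowerSeries_X_pow, HahnSeries.C_apply, HahnSeries.single_mul_single, mul_add]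
  norm_num
  abel

theorem phiSub_eq_q_sq_mul_phi :
    phiSub = HahnSeries.C (q ^ 2) * HahnSeries.single (-1 : ℤ) (1 : K) *
      HahnSeries.ofPowerSeries ℤ K phi := by
  have hq : q ≠ 0 := RatFunc.X_ne_zero
  have hs : (C q * C ((1 + q) ^ 2) : K⟦X⟧) = C (q ^ 2) * C s := by
    rw [← map_mul, ← map_mul, s]
    congr 1
    field_simp
    ring
  rw [phiSub, single_one_inv_add_two_add_single_neg_one hq, mul_assoc, ← map_mul,
    mul_assoc, one_add_C_mul_X_sq_mul_phiSubProd, ← mul_assoc, hs, mul_assoc, ← phi, map_mul,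
    HahnSeries.ofPowerSeries_C, mul_left_comm, ← mul_assoc]

local notation "ρ" => @algebraMap (RatFunc ℚ) (LaurentSeries ℚ) _ _ (RatFunc.liftAlgebra ℚ (LaurentSeries ℚ))

theorem algebraMap_q_div_one_add_q_sq :
    ρ (q / (1 + q) ^ 2) = -HahnSeries.ofPowerSeries ℤ ℚ (mk fun m => (-1 : ℚ) ^ m * m) := by
  have hq : ρ q = HahnSeries.ofPowerSeries ℤ ℚ X := by
    rw [q, RatFunc.coe_X, HahnSeries.ofPowerSeries_X]
  have hne : ρ (1 + q) ≠ 0 := by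
    rw [map_add, map_one, hq, ← map_one (HahnSeries.ofPowerSeries ℤ ℚ), ← map_add]
    refine (map_ne_zero_iff _ HahnSeries.ofPowerSeries_injective).2 fun h => ?_
    simpa using congrArg (coeff 0) h
  rw [map_div₀, map_pow, div_eq_iff (pow_ne_zero 2 hne), map_add, map_one, hq,
    ← map_one (HahnSeries.ofPowerSeries ℤ ℚ), ← map_add, ← map_pow, ← map_neg, ← map_mul,
    mul_comm, mul_neg, one_add_X_sq_mul_mk_neg_one_pow_mul, neg_neg]

theorem algebraMap_neg_q_zpow_natCast (m : ℕ) :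
    ρ ((-q) ^ (m : ℤ)) = HahnSeries.single (m : ℤ) ((-1 : ℚ) ^ m) := by
  rw [zpow_natCast, map_pow, map_neg, q, RatFunc.coe_X, ← HahnSeries.single_neg,
    HahnSeries.single_pow, nsmul_one]

theorem algebraMap_neg_q_zpow_neg_natCast (m : ℕ) :
    ρ ((-q) ^ (-(m : ℤ))) = HahnSeries.single (-(m : ℤ)) ((-1 : ℚ) ^ m) := by
  rw [zpow_neg, map_inv₀, algebraMap_neg_q_zpow_natCast, HahnSeries.inv_single, ← inv_pow,
    inv_neg, inv_one]

theorem algebraMap_natCast_mul_neg_q_zpow_sub_two_add (m : ℕ) :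
    ρ ((m : K) * ((-q) ^ (m : ℤ) - 2 + (-q) ^ (-(m : ℤ)))) =
      HahnSeries.single (m : ℤ) ((-1 : ℚ) ^ m * m) - HahnSeries.C (2 * (m : ℚ)) +
        HahnSeries.single (-(m : ℤ)) ((-1 : ℚ) ^ m * m) := by
  rw [map_mul, map_add, map_sub, map_natCast, map_ofNat, algebraMap_neg_q_zpow_natCast,
    algebraMap_neg_q_zpow_neg_natCast, ← map_natCast HahnSeries.C, ← map_ofNat HahnSeries.C,
    HahnSeries.C_apply, HahnSeries.C_apply, HahnSeries.C_apply, mul_add, mul_sub,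
    HahnSeries.single_mul_single, HahnSeries.single_mul_single, HahnSeries.single_mul_single,
    zero_add, zero_add, zero_add, mul_comm (m : ℚ), mul_comm (m : ℚ)]

theorem algebraMap_coeff_wp (e : ℕ) : ρ (coeff e wp) = wpSubCoeff e := by
  rw [wp, coeff_mk, wpSubCoeff]
  rcases Nat.eq_zero_or_pos e with rfl | he
  · rw [if_pos rfl, if_pos rfl, map_add, map_neg, map_div₀, map_one, map_ofNat,
      algebraMap_q_div_one_add_q_sq, sub_eq_add_neg]
  rw [if_neg he.ne', if_neg he.ne', map_neg, map_sum,
    Finset.sum_congr rfl fun m _ => algebraMap_natCast_mul_neg_q_zpow_sub_two_add m,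
    Finset.sum_add_distrib, Finset.sum_sub_distrib, ← map_sum]
  have hsplit : ∑ m ∈ e.divisors, HahnSeries.single (-(m : ℤ)) ((-1 : ℚ) ^ m * m) =
      ∑ m ∈ e.properDivisors, HahnSeries.single (-(m : ℤ)) ((-1 : ℚ) ^ m * m) +
        HahnSeries.single (-(e : ℤ)) ((-1 : ℚ) ^ e * e) := by
    rw [← Nat.cons_self_properDivisors he.ne', Finset.sum_cons, add_comm]
  have hsign : HahnSeries.single (-(e : ℤ)) ((-1 : ℚ) ^ (e - 1) * e) =
      -HahnSeries.single (-(e : ℤ)) ((-1 : ℚ) ^ e * e) := by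
    obtain ⟨f, rfl⟩ : ∃ f, e = f + 1 := ⟨e - 1, by omega⟩
    rw [← HahnSeries.single_neg, Nat.add_sub_cancel, pow_succ]
    congr 1
    ring
  rw [hsplit, hsign]
  abel

theorem map_algebraMap_wp : map ρ wp = wpSub :=
  ext fun e => by rw [coeff_map, wpSub, coeff_mk, algebraMap_coeff_wp]

def iotaLRingHom : LaurentSeries K →+* LaurentSeries (LaurentSeries ℚ) where
  toFun := iotaL
  map_one' := HahnSeries.map_one (RingHom.toMonoidWithZeroHom ρ)
  map_mul' _ _ := HahnSeries.map_mul (ρ : K →ₙ+* LaurentSeries ℚ)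
  map_zero' := HahnSeries.map_zero (ρ : ZeroHom K (LaurentSeries ℚ))
  map_add' _ _ := HahnSeries.map_add (ρ : K →+ LaurentSeries ℚ)

theorem iotaLRingHom_apply (f : LaurentSeries K) : iotaLRingHom f = iotaL f := rfl

theorem iotaL_single (a : ℤ) (r : K) :
    iotaL (HahnSeries.single a r) = HahnSeries.single a (ρ r) :=
  HahnSeries.map_single (ρ : ZeroHom K (LaurentSeries ℚ))

theorem iotaL_C (r : K) : iotaL (HahnSeries.C r) = HahnSeries.C (ρ r) :=
  HahnSeries.map_C r ρ

theorem iotaL_ofPowerSeries (f : K⟦X⟧) :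
    iotaL (HahnSeries.ofPowerSeries ℤ K f) = HahnSeries.ofPowerSeries ℤ _ (map ρ f) := by
  ext n : 2
  simp only [iotaL, HahnSeries.map_coeff, PowerSeries.coeff_coe, coeff_map]
  split_ifs <;> simp

theorem twelve_mul_wp_mul_phiSub :
    12 * HahnSeries.ofPowerSeries ℤ K wp * phiSub =
      HahnSeries.C (q ^ 2) * HahnSeries.single (-1 : ℤ) (1 : K) *
        HahnSeries.ofPowerSeries ℤ K phi01 := by
  rw [phiSub_eq_q_sq_mul_phi, phi01, map_mul, map_mul, map_ofNat]
  ring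

/-- The elliptic transformation law of `φ₀,₁`:
`φ₀,₁(q⁻¹t, t) := 12 ℘(q⁻¹t, t) ι(φ_{-2,1}(q⁻¹t, t))` equals `q² t⁻¹ ι(φ₀,₁(q, t))`
in `ℚ((q))((t))`. -/
theorem phi01_elliptic_transformation :
    12 * HahnSeries.ofPowerSeries ℤ (LaurentSeries ℚ) wpSub * iotaL phiSub =
      HahnSeries.C ((@algebraMap (RatFunc ℚ) (LaurentSeries ℚ) _ _ (RatFunc.liftAlgebra ℚ (LaurentSeries ℚ))) (q ^ 2)) *
        HahnSeries.single (-1 : ℤ) (1 : LaurentSeries ℚ) *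
        iotaL (HahnSeries.ofPowerSeries ℤ K phi01) := by
  have h := congrArg iotaLRingHom twelve_mul_wp_mul_phiSub
  simp only [map_mul, map_ofNat, iotaLRingHom_apply, iotaL_C, iotaL_single, map_one] at h
  rwa [iotaL_ofPowerSeries wp, map_algebraMap_wp] at h
end
end

section
/- Let 1/φ₋₂,₁(q,t) denote the inverse of φ₋₂,₁(q,t) in ℚ(q)[[t]]. For every d ≥ 0, the element of ℚ(q) given by the coefficient of t^d in 1/φ₋₂,₁(q,t) − q/(1+q)² (where q/(1+q)² is regarded as a constant power series in t) is regular at q = −1; that is, it can be written as a quotient of polynomials in q whose denominator does not vanish at q = −1. -/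
noncomputable section

open PowerSeries

/-!
Since `s = q + 2 + q⁻¹ = (1 + q)² / q`, the polar part `q / (1 + q)²` is `1 / s`, and
`(1 + q tᵐ)(1 + q⁻¹ tᵐ) = (1 - tᵐ)² + s tᵐ` turns the `m`-th factor of the product into
`(1 + s tᵐ / (1 - tᵐ)²)²`. So over the ring of rational functions regular at `q = -1` every factor,
hence the product `P`, is `≡ 1 mod s`, say `P = 1 + s g`. As `P` has constant term `1`, its inverse
is regular too, and `1/φ - 1/s = (P⁻¹ - 1)/s = -P⁻¹ g` has regular coefficients.
-/

namespace RatFunc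

variable {k : Type*} [Field k]

def regularAt (x : k) : Subring (RatFunc k) where
  carrier := {f | ∃ a b : Polynomial k, Polynomial.eval x b ≠ 0 ∧
    f = algebraMap (Polynomial k) (RatFunc k) a / algebraMap (Polynomial k) (RatFunc k) b}
  zero_mem' := ⟨0, 1, by simp, by simp⟩
  one_mem' := ⟨1, 1, by simp, by simp⟩
  add_mem' := by
    rintro _ _ ⟨a, b, hb, rfl⟩ ⟨c, d, hd, rfl⟩
    have hb0 : algebraMap (Polynomial k) (RatFunc k) b ≠ 0 :=
      algebraMap_ne_zero fun h => hb (by simp [h])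
    have hd0 : algebraMap (Polynomial k) (RatFunc k) d ≠ 0 :=
      algebraMap_ne_zero fun h => hd (by simp [h])
    exact ⟨a * d + b * c, b * d, by simp [hb, hd], by simp [div_add_div _ _ hb0 hd0]⟩
  neg_mem' := by
    rintro _ ⟨a, b, hb, rfl⟩
    exact ⟨-a, b, hb, by rw [map_neg, neg_div]⟩
  mul_mem' := by
    rintro _ _ ⟨a, b, hb, rfl⟩ ⟨c, d, hd, rfl⟩
    exact ⟨a * c, b * d, by simp [hb, hd], by rw [div_mul_div_comm, map_mul, map_mul]⟩

theorem X_mem_regularAt (x : k) : X ∈ regularAt x :=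
  ⟨Polynomial.X, 1, by simp, by simp [algebraMap_X]⟩

theorem inv_X_mem_regularAt {x : k} (hx : x ≠ 0) : X⁻¹ ∈ regularAt x :=
  ⟨1, Polynomial.X, by simpa, by simp [algebraMap_X]⟩

end RatFunc

namespace Subring

variable {R : Type*} [CommRing R]

def powerSeries (S : Subring R) : Subring (PowerSeries R) where
  carrier := {f | ∀ n, coeff n f ∈ S}
  zero_mem' _ := by simp [S.zero_mem]
  one_mem' n := by
    rw [coeff_one]
    split_ifs
    exacts [S.one_mem, S.zero_mem]
  add_mem' hf hg n := by rw [map_add]; exact add_mem (hf n) (hg n)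
  neg_mem' hf n := by rw [map_neg]; exact neg_mem (hf n)
  mul_mem' hf hg n := by
    rw [coeff_mul]
    exact sum_mem fun p _ => mul_mem (hf _) (hg _)

theorem C_mem_powerSeries {S : Subring R} {a : R} (ha : a ∈ S) : C a ∈ S.powerSeries := fun n => by
  rw [coeff_C]
  split_ifs
  exacts [ha, S.zero_mem]

theorem X_mem_powerSeries (S : Subring R) : X ∈ S.powerSeries := fun n => by
  rw [coeff_X]
  split_ifs
  exacts [S.one_mem, S.zero_mem]

theorem inv_mem_powerSeries {F : Type*} [Field F] {S : Subring F} {f : PowerSeries F}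
    (hf : f ∈ S.powerSeries) (h0 : (constantCoeff f)⁻¹ ∈ S) : f⁻¹ ∈ S.powerSeries := by
  intro n
  induction n using Nat.strong_induction_on with
  | _ n ih =>
    rw [coeff_inv]
    split_ifs
    · exact h0
    · refine mul_mem (neg_mem h0) (sum_mem fun p _ => ?_)
      split_ifs with h
      · exact mul_mem (hf _) (ih _ h)
      · exact S.zero_mem

def oneAddMul {A : Type*} [CommRing A] (T : Subring A) (a : T) : Submonoid A where
  carrier := {f | ∃ g ∈ T, f = 1 + a * g}
  one_mem' := ⟨0, T.zero_mem, by simp⟩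
  mul_mem' := by
    rintro _ _ ⟨g, hg, rfl⟩ ⟨h, hh, rfl⟩
    exact ⟨g + h + a * g * h, add_mem (add_mem hg hh) (mul_mem (mul_mem a.2 hg) hh), by ring⟩

theorem one_add_mul_mem_oneAddMul {A : Type*} [CommRing A] (T : Subring A) (a : T) {g : A}
    (hg : g ∈ T) : 1 + a * g ∈ T.oneAddMul a :=
  ⟨g, hg, rfl⟩

theorem mem_oneAddMul_powerSeries_of_coeff {S : Subring R} {a : R} (ha : a ∈ S)
    {f : PowerSeries R}
    (h : ∀ d, ∃ g ∈ S.powerSeries.oneAddMul ⟨C a, C_mem_powerSeries ha⟩, coeff d f = coeff d g) :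
    f ∈ S.powerSeries.oneAddMul ⟨C a, C_mem_powerSeries ha⟩ := by
  choose g hg hfg using h
  choose k hk hgk using hg
  refine ⟨PowerSeries.mk fun d => coeff d (k d), fun d => by simpa using hk d d, ?_⟩
  ext d
  simp [hfg d, hgk d, coeff_C_mul]

end Subring

theorem PowerSeries.C_inv_mul_inv_one_add_C_mul_sub_one {F : Type*} [Field F] {a : F}
    (ha : a ≠ 0) {g : PowerSeries F} (h0 : constantCoeff (1 + C a * g) ≠ 0) :
    C a⁻¹ * ((1 + C a * g)⁻¹ - 1) = -((1 + C a * g)⁻¹ * g) := by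
  have hinv := PowerSeries.inv_mul_cancel _ h0
  have haa : C a⁻¹ * C a = 1 := by rw [← map_mul, inv_mul_cancel₀ ha, map_one]
  linear_combination C a⁻¹ * hinv - (1 + C a * g)⁻¹ * g * haa

theorem one_add_mul_one_add_of_mul_eq_one {A : Type*} [CommRing A] {a b : A} (hab : a * b = 1)
    (x : A) : (1 + a * x) * (1 + b * x) = (1 - x) ^ 2 + (a + 2 + b) * x := by
  linear_combination x ^ 2 * hab

theorem sq_add_mul_sq_mul_pow_four_of_mul_eq_one {A : Type*} [CommRing A] {w u : A}
    (hwu : w * u = 1) (c y : A) : (w ^ 2 + c * y) ^ 2 * u ^ 4 = (1 + c * (y * u ^ 2)) ^ 2 := by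
  linear_combination (w * u + 1) * ((w ^ 2 + c * y) * u ^ 2 + 1 + c * y * u ^ 2) * hwu

theorem q_ne_zero : q ≠ 0 := RatFunc.X_ne_zero

theorem s_mul_q : s * q = (1 + q) ^ 2 := by
  rw [s]
  field_simp [q_ne_zero]
  ring

theorem one_add_q_ne_zero : 1 + q ≠ 0 := by
  simpa [q, add_comm, RatFunc.algebraMap_X] using
    RatFunc.algebraMap_ne_zero (Polynomial.X_add_C_ne_zero (1 : ℚ))

theorem s_ne_zero : s ≠ 0 := by
  intro h
  have := s_mul_q
  rw [h, zero_mul] at this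
  exact pow_ne_zero 2 one_add_q_ne_zero this.symm

theorem div_one_add_q_sq : q / (1 + q) ^ 2 = s⁻¹ := by
  rw [← s_mul_q, div_mul_cancel_right₀ q_ne_zero]

theorem constantCoeff_one_sub_X_pow {R : Type*} [CommRing R] {m : ℕ} (hm : m ≠ 0) :
    constantCoeff (1 - X ^ m : PowerSeries R) = 1 := by
  simp [constantCoeff_X, zero_pow hm]

theorem s_mem_regularAt : s ∈ RatFunc.regularAt (-1 : ℚ) :=
  add_mem (add_mem (RatFunc.X_mem_regularAt _) (natCast_mem _ 2))
    (RatFunc.inv_X_mem_regularAt (by norm_num))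

abbrev regularSeries : Subring (PowerSeries K) := (RatFunc.regularAt (-1 : ℚ)).powerSeries

abbrev oneAddSRegularSeries : Submonoid (PowerSeries K) :=
  regularSeries.oneAddMul ⟨C s, Subring.C_mem_powerSeries s_mem_regularAt⟩

theorem phiFactor_eq {m : ℕ} (hm : m ≠ 0) :
    phiFactor m = (1 + C s * (X ^ m * ((1 - X ^ m)⁻¹) ^ 2)) ^ 2 := by
  have hu : (1 - X ^ m : PowerSeries K) * (1 - X ^ m)⁻¹ = 1 :=
    PowerSeries.mul_inv_cancel _ (by simp [constantCoeff_one_sub_X_pow hm])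
  have hqq : C q * C q⁻¹ = 1 := by rw [← map_mul, mul_inv_cancel₀ q_ne_zero, map_one]
  have hs : C q + 2 + C q⁻¹ = C s := by rw [s, map_add, map_add, map_ofNat]
  rw [phiFactor, ← mul_pow, one_add_mul_one_add_of_mul_eq_one hqq, hs,
    sq_add_mul_sq_mul_pow_four_of_mul_eq_one hu]

theorem phiFactor_mem {m : ℕ} (hm : m ≠ 0) : phiFactor m ∈ oneAddSRegularSeries := by
  have hinv : (1 - X ^ m : PowerSeries K)⁻¹ ∈ regularSeries :=
    Subring.inv_mem_powerSeries (sub_mem (one_mem _) (pow_mem (Subring.X_mem_powerSeries _) m))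
      (by simp [constantCoeff_one_sub_X_pow hm])
  rw [phiFactor_eq hm]
  exact pow_mem (Subring.one_add_mul_mem_oneAddMul _ _
    (mul_mem (pow_mem (Subring.X_mem_powerSeries _) m) (pow_mem hinv 2))) 2

theorem phiProd_mem : phiProd ∈ oneAddSRegularSeries :=
  Subring.mem_oneAddMul_powerSeries_of_coeff s_mem_regularAt fun d =>
    ⟨_, prod_mem fun m (hm : m ∈ Finset.Icc 1 d) =>
      phiFactor_mem (Nat.one_le_iff_ne_zero.1 (Finset.mem_Icc.1 hm).1), coeff_mk _ _⟩

theorem constantCoeff_phiProd : constantCoeff phiProd = 1 := by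
  simp [← coeff_zero_eq_constantCoeff_apply, phiProd]

theorem inv_phi : phi⁻¹ = C s⁻¹ * phiProd⁻¹ := by
  rw [phi, PowerSeries.mul_inv_rev, PowerSeries.C_inv, mul_comm]

/-- Every `t`-coefficient of `1/φ_{-2,1}(q,t) - q/(1+q)²` is a rational
function which is regular at `q = -1`: it can be written as a quotient of polynomials whose
denominator does not vanish at `-1`. -/
theorem inv_phi_sub_polar_part_regular_at_minus_one :
    ∀ d : ℕ, ∃ a b : Polynomial ℚ,
      Polynomial.eval (-1 : ℚ) b ≠ 0 ∧
      coeff d (phi⁻¹ - C (q / (1 + q) ^ 2)) =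
        algebraMap (Polynomial ℚ) K a / algebraMap (Polynomial ℚ) K b := by
  obtain ⟨g, hg, hphiProd⟩ := phiProd_mem
  have hP0 : constantCoeff (1 + C s * g) ≠ 0 := by
    rw [← hphiProd, constantCoeff_phiProd]
    exact one_ne_zero
  have hP : phiProd ∈ regularSeries := by
    rw [hphiProd]
    exact add_mem (one_mem _) (mul_mem (Subring.C_mem_powerSeries s_mem_regularAt) hg)
  have hpolar : phi⁻¹ - C (q / (1 + q) ^ 2) = -(phiProd⁻¹ * g) := by
    rw [div_one_add_q_sq, inv_phi, ← mul_sub_one, hphiProd,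
      C_inv_mul_inv_one_add_C_mul_sub_one s_ne_zero hP0]
  have hPinv : phiProd⁻¹ ∈ regularSeries :=
    Subring.inv_mem_powerSeries hP (by simp [constantCoeff_phiProd])
  rw [hpolar]
  exact neg_mem (mul_mem hPinv hg)

end
end
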